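/- Let F be a finite field with q elements, and let G be the semidirect product of the additive group of F by the multiplicative group Fˣ of units of F, where Fˣ acts on the additive group of F by multiplication. Then G has order q(q−1) and there exists a finite-dimensional simple module over the complex group algebra ℂ[G] of dimension q − 1. -/

import Mathlib

open FDRep CategoryTheory

/-- The natural monoid homomorphism from additive automorphisms of `A` to
multiplicative automorphisms of `Multiplicative A`. -/
def addAutToMulAut (A : Type) [AddGroup A] : Multiplicative (AddAut A) →* MulAut (Multiplicative A) where
  toFun f := AddEquiv.toMultiplicative (Multiplicative.toAdd f)
  map_one' := rfl
  map_mul' _ _ := rfl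

/-- The action of the unit group of a field `F` on its additive group by
multiplication, as a homomorphism into the automorphism group. -/
def unitsMulAction (F : Type) [Field F] : Fˣ →* MulAut (Multiplicative F) :=
  (addAutToMulAut F).comp (DistribMulAction.toAddAut Fˣ F)


/-!
Induce a nontrivial additive character `ψ` of `F` up to `G = F ⋊ Fˣ`; the induced representation
lives on functions `Fˣ → ℂ`, so it has dimension `q - 1`. Its character vanishes off `F` and takes
the value `∑_{b ≠ 0} ψ (b x)` at `x ∈ F`, which is `q - 1` for `x = 0` and `-1` otherwise. Hence
`∑_g χ(g) χ(g⁻¹) = (q - 1)² + (q - 1) = |G|`, and a character of norm one is irreducible.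
-/

open Multiplicative

abbrev AffineGroup (F : Type) [Field F] : Type := Multiplicative F ⋊[unitsMulAction F] Fˣ

namespace AffineGroup

variable {F : Type} [Field F]

@[simp]
lemma toAdd_unitsMulAction (u : Fˣ) (x : Multiplicative F) :
    toAdd (unitsMulAction F u x) = u * toAdd x := rfl

/-- `Ind_F^G ψ`, realised on the restrictions to `Fˣ` of the functions on `G` that transform
by `ψ` under `F`. -/
def inducedRep (ψ : AddChar F ℂ) : Representation ℂ (AffineGroup F) (Fˣ → ℂ) where
  toFun g :=
    { toFun f b := ψ (b * toAdd g.left) * f (b * g.right)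
      map_add' f₁ f₂ := by funext b; simp [mul_add]
      map_smul' c f := by funext b; simp [mul_left_comm] }
  map_one' := by ext; simp
  map_mul' g g' := by
    ext f b
    simp [mul_add, AddChar.map_add_eq_mul, mul_assoc]

@[simp]
lemma inducedRep_apply (ψ : AddChar F ℂ) (g : AffineGroup F) (f : Fˣ → ℂ) (b : Fˣ) :
    inducedRep ψ g f b = ψ (b * toAdd g.left) * f (b * g.right) := rfl

variable [Fintype F]

instance [DecidableEq F] : Fintype (AffineGroup F) :=
  Fintype.ofEquiv _ SemidirectProduct.equivProd.symm

lemma card : Nat.card (AffineGroup F) = Fintype.card F * (Fintype.card F - 1) := by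
  classical
  rw [SemidirectProduct.card]
  simp [Fintype.card_units]

lemma finrank_inducedRep (ψ : AddChar F ℂ) :
    Module.finrank ℂ (FDRep.of (inducedRep ψ)) = Fintype.card F - 1 := by
  classical
  simp [Fintype.card_units]

variable [DecidableEq F]

lemma sum_units_addChar_mul {ψ : AddChar F ℂ} (hψ : ψ.IsPrimitive) (x : F) :
    ∑ b : Fˣ, ψ (b * x) = (if x = 0 then (Fintype.card F : ℂ) else 0) - 1 := by
  have h := AddChar.sum_mulShift x hψ
  rw [Fintype.sum_eq_add_sum_subtype_ne _ 0,
    ← Fintype.sum_equiv unitsEquivNeZero (fun b : Fˣ => ψ (b * x)) _ fun _ => rfl] at h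
  push_cast [zero_mul, AddChar.map_zero_eq_one] at h
  linear_combination h

lemma character_inducedRep (ψ : AddChar F ℂ) (g : AffineGroup F) :
    (FDRep.of (inducedRep ψ)).character g =
      if g.right = 1 then ∑ b : Fˣ, ψ (b * toAdd g.left) else 0 := by
  change LinearMap.trace ℂ _ (inducedRep ψ g) = _
  rw [LinearMap.trace_eq_matrix_trace ℂ (Pi.basisFun ℂ Fˣ), Matrix.trace]
  split_ifs with h <;> simp [h]

lemma sum_character_mul_character_inv {ψ : AddChar F ℂ} (hψ : ψ.IsPrimitive) :
    ∑ g : AffineGroup F, (FDRep.of (inducedRep ψ)).character g *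
      (FDRep.of (inducedRep ψ)).character g⁻¹ = Fintype.card F * (Fintype.card F - 1) := by
  set q : ℂ := (Fintype.card F : ℂ)
  have sum_neg (y : F) : ∑ b : Fˣ, ψ (-(b * y)) = ∑ b : Fˣ, ψ (b * y) :=
    Fintype.sum_equiv (Equiv.neg _) _ _ fun b => by simp
  calc _ = ∑ x : F, (∑ b : Fˣ, ψ (b * x)) * ∑ b : Fˣ, ψ (b * x) := by
        rw [← Fintype.sum_equiv SemidirectProduct.equivProd.symm _ _ fun _ => rfl,
          Fintype.sum_prod_type]
        refine Fintype.sum_equiv toAdd _ _ fun x => ?_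
        simp [character_inducedRep, MulAut.one_def, sum_neg]
    _ = ∑ x : F, ((if x = 0 then q * (q - 2) else 0) + 1) := by
        refine Finset.sum_congr rfl fun x _ => ?_
        rw [sum_units_addChar_mul hψ]
        split_ifs <;> ring
    _ = q * (q - 1) := by
        simp [Finset.sum_add_distrib, q]
        ring

lemma simple_inducedRep {ψ : AddChar F ℂ} (hψ : ψ.IsPrimitive) :
    Simple (FDRep.of (inducedRep ψ)) := by
  rw [FDRep.simple_iff_char_is_norm_one, sum_character_mul_character_inv hψ, card]
  push_cast [Nat.cast_sub Fintype.card_pos]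
  rfl

end AffineGroup

theorem stmt_19 (F : Type) [Field F] [Fintype F] (q : ℕ) (hq : Fintype.card F = q) :
    Nat.card (Multiplicative F ⋊[unitsMulAction F] Fˣ) = q * (q - 1) ∧
    ∃ V : FDRep ℂ (Multiplicative F ⋊[unitsMulAction F] Fˣ),
      Simple V ∧ Module.finrank ℂ V = q - 1 := by
  classical
  subst hq
  obtain ⟨ψ, hψ⟩ := (AddChar.exists_apply_ne_zero (a := (1 : F))).2 one_ne_zero
  have hprim : ψ.IsPrimitive := AddChar.IsPrimitive.of_ne_one fun h => hψ (by simp [h])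
  exact ⟨AffineGroup.card, _, AffineGroup.simple_inducedRep hprim,
    AffineGroup.finrank_inducedRep ψ⟩
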